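/- Let D ⊆ ℝⁿ be an infinite set of vectors. If D is positively independent, then pspan(D) ≠ span(D). -/

import Mathlib

/-!
If `pspan D = span D`, the cone generated by `D` is a finite-dimensional subspace, hence a
finitely generated cone (by a spanning set and its negatives), hence generated by a finite subset
of `D`. Any element of `D` outside that subset is then redundant, contradicting positive
independence.
-/

open scoped RealInnerProductSpace

noncomputable section

/-- The positive span of a set `D`: all finite nonnegative linear combinations
of elements of `D`. -/
def pspan {E : Type*} [AddCommGroup E] [Module ℝ E] (D : Set E) : Set E :=
  {x | ∃ (k : ℕ) (d : Fin k → E) (c : Fin k → ℝ),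
    (∀ i, d i ∈ D) ∧ (∀ i, 0 ≤ c i) ∧ x = ∑ i, c i • d i}

/-- The cosine measure of `D` relative to a subspace `L`:
`min` over unit vectors `u ∈ L` of `sup_{d ∈ D} ⟪u, d⟫ / ‖d‖`. -/
noncomputable def cmRel {E : Type*} [NormedAddCommGroup E] [InnerProductSpace ℝ E]
    (L : Submodule ℝ E) (D : Set E) : ℝ :=
  sInf ((fun u => sSup ((fun d => ⟪u, d⟫ / ‖d‖) '' D)) '' {u : E | u ∈ L ∧ ‖u‖ = 1})

/-- The cosine vector set of `D` relative to a subspace `L`: the set of unit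
vectors `u ∈ L` attaining the minimum defining `cmRel L D`. -/
noncomputable def cVRel {E : Type*} [NormedAddCommGroup E] [InnerProductSpace ℝ E]
    (L : Submodule ℝ E) (D : Set E) : Set E :=
  {u : E | u ∈ L ∧ ‖u‖ = 1 ∧ sSup ((fun d => ⟪u, d⟫ / ‖d‖) '' D) = cmRel L D}

open Submodule in
theorem pspan_eq_hull {E : Type*} [AddCommGroup E] [Module ℝ E] (D : Set E) :
    pspan D = PointedCone.hull ℝ D := by
  ext x
  simp only [pspan, Set.mem_ofPred_eq, SetLike.mem_coe, mem_span_set']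
  constructor
  · rintro ⟨k, d, c, hd, hc, rfl⟩
    exact ⟨k, fun i => ⟨c i, hc i⟩, fun i => ⟨d i, hd i⟩, rfl⟩
  · rintro ⟨k, f, g, rfl⟩
    exact ⟨k, fun i => g i, fun i => f i, fun i => (g i).2, fun i => (f i).2, rfl⟩

namespace PointedCone

variable {R E : Type*}

open Submodule Pointwise

theorem fg_ofSubmodule [Ring R] [LinearOrder R] [IsOrderedRing R] [AddCommGroup E] [Module R E]
    {S : Submodule R E} (hS : S.FG) : (S : PointedCone R E).FG := by
  obtain ⟨t, ht, rfl⟩ := fg_def.mp hS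
  suffices (span R t : PointedCone R E) = hull R (t ∪ -t) from
    this ▸ fg_span (ht.union ht.neg)
  refine le_antisymm ?_ (span_le.mpr ?_)
  · refine gc_ofSubmodule_lineal.le_iff_le.mpr (span_le.mpr fun x hx => ?_)
    exact ⟨subset_hull (Or.inl hx), subset_hull (Or.inr (by simpa using hx))⟩
  · rintro x (hx | hx)
    · exact Submodule.subset_span hx
    · simpa using (span R t).neg_mem (Submodule.subset_span hx)

theorem finite_of_fg_of_forall_hull_diff_singleton_ne [Semiring R] [PartialOrder R]
    [IsOrderedRing R] [AddCommMonoid E] [Module R E] {s : Set E} (hfg : (hull R s).FG)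
    (hs : ∀ d ∈ s, hull R (s \ {d}) ≠ hull R s) : s.Finite := by
  obtain ⟨t, hts, hst⟩ := (fg_span_iff_fg_span_finset_subset s).mp hfg
  by_contra hinf
  obtain ⟨d, hds, hdt⟩ := (Set.Infinite.sdiff hinf t.finite_toSet).nonempty
  refine hs d hds (le_antisymm (span_mono Set.sdiff_subset) ?_)
  calc hull R s = hull R t := hst
    _ ≤ hull R (s \ {d}) := span_mono fun x hx => ⟨hts hx, by rintro rfl; exact hdt hx⟩

end PointedCone

theorem stmt2 {n : ℕ} (D : Set (EuclideanSpace ℝ (Fin n))) (hinf : D.Infinite)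
    (hpi : ∀ d ∈ D, pspan (D \ {d}) ≠ pspan D) :
    pspan D ≠ (Submodule.span ℝ D : Set (EuclideanSpace ℝ (Fin n))) := by
  intro h
  simp only [pspan_eq_hull, ne_eq, SetLike.coe_set_eq] at h hpi
  have hcone : PointedCone.hull ℝ D = Submodule.span ℝ D := SetLike.coe_injective h
  refine hinf (PointedCone.finite_of_fg_of_forall_hull_diff_singleton_ne ?_ hpi)
  exact hcone ▸ PointedCone.fg_ofSubmodule (IsNoetherian.noetherian _)
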